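/- Let (V,d) be a finite metric space and S ⊆ V obtained by the greedy farthest-point (Gonzalez) procedure: S_1 = {v_1} arbitrary, and S_{i+1} = S_i ∪ {v} where v maximizes min_{c∈S_i} d(v,c); set S = S_k. Then max_{v∈V} min_{c∈S} d(v,c) ≤ 2 · min_{T⊆V, |T|=k} max_{v∈V} min_{c∈T} d(v,c); i.e., greedy farthest-point clustering is a 2-approximation for the vertex k-center problem. -/

import Mathlib

/-!
Let `u` be a point farthest from the greedy centers `v 0, …, v (k-1)`, at distance `G`. By the
greedy rule each `v j` was at least as far from its predecessors as `u` was, so the `k + 1`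
points `v 0, …, v (k-1), u` are pairwise at distance at least `G`. Two of them share a nearest
center in any `k`-element set `T`, so by the triangle inequality `G` is at most twice the
covering radius of `T`.
-/

open Finset

section CoveringRadius

variable {X : Type*} [PseudoMetricSpace X] [Fintype X] [Nonempty X]

noncomputable def coveringRadius (T : Finset X) (hT : T.Nonempty) : ℝ :=
  univ.sup' univ_nonempty fun u => T.inf' hT fun c => dist u c

theorem exists_mem_dist_le_coveringRadius {T : Finset X} (hT : T.Nonempty) (u : X) :
    ∃ c ∈ T, dist u c ≤ coveringRadius T hT := by
  obtain ⟨c, hc, hmin⟩ := exists_mem_eq_inf' hT fun c => dist u c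
  exact ⟨c, hc, hmin ▸ le_sup' (fun u => T.inf' hT fun c => dist u c) (mem_univ u)⟩

theorem le_two_mul_coveringRadius_of_pairwise {ι : Type*} [Fintype ι] {T : Finset X}
    (hT : T.Nonempty) (hcard : #T < Fintype.card ι) (w : ι → X) {G : ℝ}
    (hsep : Pairwise fun i j => G ≤ dist (w i) (w j)) :
    G ≤ 2 * coveringRadius T hT := by
  choose center hcenter hdist using exists_mem_dist_le_coveringRadius hT
  obtain ⟨i, j, hij, hshared⟩ := Fintype.exists_ne_map_eq_of_card_lt
    (fun i => (⟨center (w i), hcenter (w i)⟩ : T)) (by rwa [Fintype.card_coe])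
  have hshared : center (w i) = center (w j) := congrArg Subtype.val hshared
  calc G ≤ dist (w i) (w j) := hsep hij
    _ ≤ dist (w i) (center (w i)) + dist (w j) (center (w j)) := by
      rw [hshared]; exact dist_triangle_right _ _ _
    _ ≤ 2 * coveringRadius T hT := by linarith [hdist (w i), hdist (w j)]

end CoveringRadius

section Greedy

variable {X : Type*} [PseudoMetricSpace X]

def IsGreedyFarthestPoint (v : ℕ → X) (k : ℕ) : Prop :=
  ∀ i, ∀ hi : 0 < i, i < k → ∀ u : X,
    (range i).inf' (nonempty_range_iff.mpr hi.ne') (fun j => dist u (v j))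
      ≤ (range i).inf' (nonempty_range_iff.mpr hi.ne') (fun j => dist (v i) (v j))

variable {v : ℕ → X} {k : ℕ}

theorem IsGreedyFarthestPoint.inf'_dist_le_dist (hv : IsGreedyFarthestPoint v k) (hk : 0 < k)
    (u : X) {i j : ℕ} (hij : i < j) (hjk : j < k) :
    (range k).inf' (nonempty_range_iff.mpr hk.ne') (fun l => dist u (v l)) ≤ dist (v i) (v j) :=
  have hj : 0 < j := i.zero_le.trans_lt hij
  calc (range k).inf' _ (fun l => dist u (v l))
      ≤ (range j).inf' (nonempty_range_iff.mpr hj.ne') (fun l => dist u (v l)) :=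
        inf'_mono _ (range_subset_range.mpr hjk.le) _
    _ ≤ (range j).inf' _ (fun l => dist (v j) (v l)) := hv j hj hjk u
    _ ≤ dist (v j) (v i) := inf'_le _ (mem_range.mpr hij)
    _ = dist (v i) (v j) := dist_comm _ _

theorem IsGreedyFarthestPoint.pairwise_le_dist (hv : IsGreedyFarthestPoint v k) (hk : 0 < k)
    (u : X) :
    Pairwise fun a b : Option (Fin k) =>
      (range k).inf' (nonempty_range_iff.mpr hk.ne') (fun l => dist u (v l))
        ≤ dist (a.elim u (v ·)) (b.elim u (v ·)) := by
  have hu : ∀ i : Fin k,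
      (range k).inf' (nonempty_range_iff.mpr hk.ne') (fun l => dist u (v l)) ≤ dist u (v i) :=
    fun i => inf'_le _ (mem_range.mpr i.isLt)
  rintro (_ | i) (_ | j) hne
  · exact absurd rfl hne
  · exact hu j
  · exact (hu i).trans_eq (dist_comm _ _)
  · have hij : (i : ℕ) ≠ j := fun h => hne (congrArg some (Fin.ext h))
    rcases lt_or_gt_of_ne hij with h | h
    · exact hv.inf'_dist_le_dist hk u h j.isLt
    · exact (hv.inf'_dist_le_dist hk u h i.isLt).trans_eq (dist_comm _ _)

end Greedy

/-- Greedy farthest-point (Gonzalez) clustering is a 2-approximation for the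
vertex `k`-center problem on a finite metric space: if `v 0, …, v (k-1)` are chosen
greedily (each new point maximizes its distance to the previously chosen points),
then the objective of `S = {v 0, …, v (k-1)}` is at most twice the objective of any
`k`-element center set `T`. -/
theorem gonzalez_two_approximation {V : Type*} [Fintype V] [Nonempty V] [MetricSpace V]
    [DecidableEq V]
    (k : ℕ) (hk : 1 ≤ k)
    (v : ℕ → V)
    (hgreedy : ∀ i, ∀ hi : 0 < i, i < k → ∀ u : V,
      (Finset.range i).inf' (Finset.nonempty_range_iff.mpr (by omega)) (fun j => dist u (v j))
        ≤ (Finset.range i).inf' (Finset.nonempty_range_iff.mpr (by omega))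
            (fun j => dist (v i) (v j))) :
    ∀ T : Finset V, T.card = k → ∀ hT : T.Nonempty,
      Finset.univ.sup' Finset.univ_nonempty
          (fun u => ((Finset.range k).image v).inf'
            ((Finset.nonempty_range_iff.mpr (by omega)).image v) (fun c => dist u c))
        ≤ 2 * Finset.univ.sup' Finset.univ_nonempty (fun u => T.inf' hT (fun c => dist u c)) := by
  intro T hTcard hT
  have hv : IsGreedyFarthestPoint v k := hgreedy
  refine sup'_le _ _ fun u _ => ?_
  rw [inf'_image]
  refine le_two_mul_coveringRadius_of_pairwise hT ?_ _
    (hv.pairwise_le_dist hk u)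
  simp [hTcard]
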